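/- (Self-adjointness on (a,b).) Let a, b ∈ I with a ≤ s0 ≤ b, let r : I → ℝ be continuous on [a,b], and let a1, a2, b1, b2 be real numbers with |a1| + |a2| ≠ 0 and |b1| + |b2| ≠ 0. Let y, z : I → ℂ belong to L²_β(a,b), be continuous and differentiable at s0, with D_β y and D_β z differentiable at s0 and D_β y, D_β z, D_{β^{-1}}D_β y, D_{β^{-1}}D_β z bounded on {β^k(a), β^k(b) : k ∈ ℕ₀} ∪ {s0}, and suppose both y and z satisfy the boundary conditions a1·w(a) + a2·(D_{β^{-1}}w)(a) = 0 and b1·w(b) + b2·(D_{β^{-1}}w)(b) = 0. Then ⟨ℓ_β y, z⟩ = ⟨y, ℓ_β z⟩, the inner products being taken over (a,b). -/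

import Mathlib

open Function Set ComplexConjugate

/-- The β-derivative `D_β f` of `f : ℝ → ℂ`:
`(f (β t) - f t) / (β t - t)` for `t ≠ s0`, and `f' s0` at `t = s0`. -/
noncomputable def Dq (β : ℝ → ℝ) (s0 : ℝ) (f : ℝ → ℂ) (t : ℝ) : ℂ :=
  if t = s0 then deriv f s0 else (f (β t) - f t) / ((β t : ℂ) - (t : ℂ))

/-- The β-integral `∫_{s0}^{x} f d_β = ∑_{k} (β^k x - β^{k+1} x) f (β^k x)` (complex-valued). -/
noncomputable def betaInt (β : ℝ → ℝ) (x : ℝ) (f : ℝ → ℂ) : ℂ :=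
  ∑' k : ℕ, ((β^[k] x - β^[k + 1] x : ℝ) : ℂ) * f (β^[k] x)

/-- The β-integral `∫_{s0}^{x} f d_β` for a real-valued integrand. -/
noncomputable def betaIntR (β : ℝ → ℝ) (x : ℝ) (f : ℝ → ℝ) : ℝ :=
  ∑' k : ℕ, (β^[k] x - β^[k + 1] x) * f (β^[k] x)

/-- `∫_a^b f d_β := ∫_{s0}^b f d_β - ∫_{s0}^a f d_β`. -/
noncomputable def betaIntAB (β : ℝ → ℝ) (a b : ℝ) (f : ℝ → ℂ) : ℂ :=
  betaInt β b f - betaInt β a f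

/-- `∫_a^b f d_β` for a real-valued integrand. -/
noncomputable def betaIntRAB (β : ℝ → ℝ) (a b : ℝ) (f : ℝ → ℝ) : ℝ :=
  betaIntR β b f - betaIntR β a f

/-- `D_β β⁻¹`, viewed as a complex-valued function. -/
noncomputable def DbinvC (β βinv : ℝ → ℝ) (s0 : ℝ) : ℝ → ℂ :=
  Dq β s0 fun u => (βinv u : ℂ)

/-- The β-Sturm–Liouville operator
`ℓ_β y (t) = -(D_β β⁻¹)(t) · (D_{β⁻¹} (D_β y))(t) + r t · y t`. -/
noncomputable def ellBeta (β βinv : ℝ → ℝ) (s0 : ℝ) (r : ℝ → ℝ) (y : ℝ → ℂ) (t : ℝ) : ℂ :=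
  -(DbinvC β βinv s0 t) * Dq βinv s0 (Dq β s0 y) t + (r t : ℂ) * y t

/-- The β-Wronskian `[y,z](t) = y t · (D_{β⁻¹} z) t - z t · (D_{β⁻¹} y) t`. -/
noncomputable def wronk (βinv : ℝ → ℝ) (s0 : ℝ) (y z : ℝ → ℂ) (t : ℝ) : ℂ :=
  y t * Dq βinv s0 z t - z t * Dq βinv s0 y t

/-- The β-exponential `e_{p,β}(t) = 1 / ∏_k (1 - p(β^k t)(β^k t - β^{k+1} t))`. -/
noncomputable def ebeta (β : ℝ → ℝ) (p : ℝ → ℂ) (t : ℝ) : ℂ :=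
  1 / ∏' k : ℕ, (1 - p (β^[k] t) * ((β^[k] t - β^[k + 1] t : ℝ) : ℂ))

/-- The β-exponential `E_{p,β}(t) = ∏_k (1 + p(β^k t)(β^k t - β^{k+1} t))`. -/
noncomputable def Ebeta (β : ℝ → ℝ) (p : ℝ → ℂ) (t : ℝ) : ℂ :=
  ∏' k : ℕ, (1 + p (β^[k] t) * ((β^[k] t - β^[k + 1] t : ℝ) : ℂ))

/-- `sin_{p,β}(t) = (e_{ip,β}(t) - e_{-ip,β}(t)) / (2i)`. -/
noncomputable def sinBeta (β : ℝ → ℝ) (p : ℝ → ℂ) (t : ℝ) : ℂ :=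
  (ebeta β (fun s => Complex.I * p s) t - ebeta β (fun s => -(Complex.I * p s)) t) /
    (2 * Complex.I)

/-- `cos_{p,β}(t) = (e_{ip,β}(t) + e_{-ip,β}(t)) / 2`. -/
noncomputable def cosBeta (β : ℝ → ℝ) (p : ℝ → ℂ) (t : ℝ) : ℂ :=
  (ebeta β (fun s => Complex.I * p s) t + ebeta β (fun s => -(Complex.I * p s)) t) / 2

/-!
Write `W = [y, z̄]` for the β-Wronskian. Away from `s0` one has the β-Lagrange identity
`(t - β t) (ℓ_β y · z̄ - y · ℓ_β z̄)(t) = W t - W (β t)`, and conjugation commutes with `D_β`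
and `D_{β⁻¹}` (also at `s0`, where they are derivatives), hence with `ℓ_β`. Along the orbit
`β^k x → s0` the β-integral from `s0` to `x` of `ℓ_β y · z̄ - y · conj (ℓ_β z)` therefore
telescopes to `W x - W s0`. Each of the two series converges on its own: every step of the
orbit lies between the current point and `s0`, so the step lengths telescope in `|· - s0|` and
are summable, while all other factors are bounded along the orbit. Subtracting the cases `x = a`
and `x = b` leaves `W b - W a`, and two functions satisfying the same nontrivial separated
boundary condition have vanishing Wronskian there.
-/

open Filter Topology

theorem Summable.tsum_eq_sub_of_telescoping {E : Type*} [AddCommGroup E] [TopologicalSpace E]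
    [IsTopologicalAddGroup E] [T2Space E] {f w : ℕ → E} {L : E} (hf : Summable f)
    (htel : ∀ k, f k = w k - w (k + 1)) (hw : Tendsto w atTop (𝓝 L)) :
    ∑' k, f k = w 0 - L := by
  refine tendsto_nhds_unique hf.hasSum.tendsto_sum_nat ?_
  simp_rw [htel, Finset.sum_range_sub']
  exact tendsto_const_nhds.sub hw

theorem summable_ofReal_mul_of_norm_le {c : ℕ → ℝ} {g : ℕ → ℂ} {C : ℝ}
    (hc : Summable fun k => |c k|) (hg : ∀ k, ‖g k‖ ≤ C) :
    Summable fun k => (c k : ℂ) * g k :=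
  Summable.of_norm_bounded (hc.mul_right C) fun k => by
    rw [norm_mul, Complex.norm_real, Real.norm_eq_abs]
    exact mul_le_mul_of_nonneg_left (hg k) (abs_nonneg _)

theorem abs_sub_eq_abs_sub_sub_abs_sub {a v w : ℝ} (hw : w ∈ uIcc a v) :
    |v - w| = |v - a| - |w - a| := by
  have := dist_add_dist_of_mem_segment (x := v) (y := w) (z := a)
    (by rwa [segment_eq_uIcc, uIcc_comm])
  simp only [Real.dist_eq] at this
  linarith

section Orbit

variable {I : Set ℝ} {β : ℝ → ℝ} {s0 : ℝ}

theorem apply_mem_uIcc (hmono : MonotoneOn β I) (hs0I : s0 ∈ I) (hfix : β s0 = s0)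
    (hsign : ∀ t ∈ I, (t - s0) * (β t - t) ≤ 0) {t : ℝ} (ht : t ∈ I) :
    β t ∈ uIcc s0 t := by
  have hs := hsign t ht
  rcases lt_trichotomy t s0 with h | rfl | h
  · rw [uIcc_of_ge h.le]
    exact ⟨by nlinarith, hfix ▸ hmono ht hs0I h.le⟩
  · simp [hfix]
  · rw [uIcc_of_le h.le]
    exact ⟨hfix ▸ hmono hs0I ht h.le, by nlinarith⟩

theorem iterate_succ_mem_uIcc (hmono : MonotoneOn β I) (hmaps : MapsTo β I I) (hs0I : s0 ∈ I)
    (hfix : β s0 = s0) (hsign : ∀ t ∈ I, (t - s0) * (β t - t) ≤ 0) {x : ℝ} (hx : x ∈ I)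
    (k : ℕ) : β^[k + 1] x ∈ uIcc s0 (β^[k] x) := by
  rw [iterate_succ_apply']
  exact apply_mem_uIcc hmono hs0I hfix hsign (hmaps.iterate k hx)

theorem iterate_mem_uIcc (hmono : MonotoneOn β I) (hmaps : MapsTo β I I) (hs0I : s0 ∈ I)
    (hfix : β s0 = s0) (hsign : ∀ t ∈ I, (t - s0) * (β t - t) ≤ 0) {x : ℝ} (hx : x ∈ I)
    (k : ℕ) : β^[k] x ∈ uIcc s0 x := by
  induction k with
  | zero => exact right_mem_uIcc
  | succ k ih =>
    exact uIcc_subset_uIcc_left ih (iterate_succ_mem_uIcc hmono hmaps hs0I hfix hsign hx k)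

theorem summable_abs_iterate_sub (hmono : MonotoneOn β I) (hmaps : MapsTo β I I)
    (hs0I : s0 ∈ I) (hfix : β s0 = s0) (hsign : ∀ t ∈ I, (t - s0) * (β t - t) ≤ 0)
    {x : ℝ} (hx : x ∈ I) : Summable fun k => |β^[k] x - β^[k + 1] x| := by
  have hstep (k : ℕ) : |β^[k] x - β^[k + 1] x| = |β^[k] x - s0| - |β^[k + 1] x - s0| :=
    abs_sub_eq_abs_sub_sub_abs_sub (iterate_succ_mem_uIcc hmono hmaps hs0I hfix hsign hx k)
  refine summable_of_sum_range_le (c := |x - s0|) (fun _ => abs_nonneg _) fun n => ?_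
  rw [Finset.sum_congr rfl fun k _ => hstep k, Finset.sum_range_sub' (fun k => |β^[k] x - s0|)]
  simp

theorem tendsto_iterate_nhds (hIconn : I.OrdConnected) (hmono : MonotoneOn β I)
    (hcont : ContinuousOn β I) (hmaps : MapsTo β I I) (hs0I : s0 ∈ I) (hfix : β s0 = s0)
    (hsign : ∀ t ∈ I, (t - s0) * (β t - t) ≤ 0)
    (huniq : ∀ t ∈ I, (t - s0) * (β t - t) = 0 → t = s0) {x : ℝ} (hx : x ∈ I) :
    Tendsto (fun k => β^[k] x) atTop (𝓝 s0) := by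
  have hcauchy : CauchySeq fun k => β^[k] x := cauchySeq_of_summable_dist <| by
    simpa only [Real.dist_eq] using summable_abs_iterate_sub hmono hmaps hs0I hfix hsign hx
  obtain ⟨L, hL⟩ := cauchySeq_tendsto_of_complete hcauchy
  have hLI : L ∈ I := hIconn.uIcc_subset hs0I hx <| isClosed_Icc.mem_of_tendsto hL <|
    Eventually.of_forall (iterate_mem_uIcc hmono hmaps hs0I hfix hsign hx)
  have hβL : β L = L := by
    have hβu : Tendsto (fun k => β (β^[k] x)) atTop (𝓝 (β L)) :=
      (hcont L hLI).tendsto.comp <| tendsto_nhdsWithin_iff.2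
        ⟨hL, Eventually.of_forall fun k => hmaps.iterate k hx⟩
    refine tendsto_nhds_unique hβu ?_
    simpa only [iterate_succ_apply'] using (tendsto_add_atTop_iff_nat 1).2 hL
  rwa [huniq L hLI (by rw [hβL, sub_self, mul_zero])] at hL

theorem iterate_ne (hmono : StrictMonoOn β I) (hmaps : MapsTo β I I) (hs0I : s0 ∈ I)
    (hfix : β s0 = s0) {x : ℝ} (hx : x ∈ I) (hxs : x ≠ s0) (k : ℕ) : β^[k] x ≠ s0 := by
  induction k with
  | zero => exact hxs
  | succ k ih =>
    rw [iterate_succ_apply', ← hfix]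
    exact fun h => ih (hmono.injOn (hmaps.iterate k hx) hs0I h)

end Orbit

section DifferenceQuotients

variable {β βinv : ℝ → ℝ} {s0 : ℝ}

theorem Dq_conj (γ : ℝ → ℝ) (f : ℝ → ℂ) :
    Dq γ s0 (fun s => conj (f s)) = fun t => conj (Dq γ s0 f t) := by
  ext t
  unfold Dq
  split_ifs
  · -- `deriv.star` holds without differentiability: otherwise both sides are `0`.
    exact deriv.star
  · simp only [map_div₀, map_sub, Complex.conj_ofReal]

theorem conj_DbinvC (t : ℝ) : conj (DbinvC β βinv s0 t) = DbinvC β βinv s0 t := by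
  unfold DbinvC
  simpa only [Complex.conj_ofReal] using congrFun (Dq_conj β fun u => (βinv u : ℂ)).symm t

theorem conj_ellBeta (r : ℝ → ℝ) (z : ℝ → ℂ) (t : ℝ) :
    conj (ellBeta β βinv s0 r z t) = ellBeta β βinv s0 r (fun s => conj (z s)) t := by
  simp only [ellBeta, Dq_conj, map_add, map_mul, map_neg, conj_DbinvC, Complex.conj_ofReal]

theorem Dq_inv_apply_eq_Dq (g : ℝ → ℂ) {t : ℝ} (ht : t ≠ s0) (hβt : β t ≠ s0)
    (hleft : βinv (β t) = t) : Dq βinv s0 g (β t) = Dq β s0 g t := by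
  simp only [Dq, if_neg ht, if_neg hβt, hleft]
  rw [← neg_div_neg_eq, neg_sub, neg_sub]

theorem sub_mul_DbinvC {t : ℝ} (ht : t ≠ s0) (hβt : β t ≠ t) (hleft : βinv (β t) = t) :
    ((t - β t : ℝ) : ℂ) * DbinvC β βinv s0 t = -((t - βinv t : ℝ) : ℂ) := by
  have : (β t : ℂ) - t ≠ 0 := sub_ne_zero.mpr (mod_cast hβt)
  rw [DbinvC, Dq, if_neg ht, hleft]
  push_cast
  field_simp
  ring

theorem sub_mul_ellBeta_mul_sub (r : ℝ → ℝ) (y Z : ℝ → ℂ) {t : ℝ} (ht : t ≠ s0)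
    (hβt : β t ≠ s0) (hβinvt : βinv t ≠ s0) (hβt_ne : β t ≠ t)
    (hleft : βinv (β t) = t) (hright : β (βinv t) = t) :
    ((t - β t : ℝ) : ℂ) * (ellBeta β βinv s0 r y t * Z t - y t * ellBeta β βinv s0 r Z t) =
      wronk βinv s0 y Z t - wronk βinv s0 y Z (β t) := by
  have hβinvt_ne : βinv t ≠ t := fun h => hβt_ne (by rw [← h, hright, h])
  have h1 : (β t : ℂ) - t ≠ 0 := sub_ne_zero.mpr (mod_cast hβt_ne)
  have h2 : (βinv t : ℂ) - t ≠ 0 := sub_ne_zero.mpr (mod_cast hβinvt_ne)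
  have h3 : (t : ℂ) - βinv t ≠ 0 := sub_ne_zero.mpr (mod_cast hβinvt_ne.symm)
  have h4 : (t : ℂ) - β t ≠ 0 := sub_ne_zero.mpr (mod_cast hβt_ne.symm)
  simp only [ellBeta, wronk, DbinvC, Dq, if_neg ht, if_neg hβt, if_neg hβinvt, hleft, hright]
  push_cast
  field_simp
  ring

theorem wronk_eq_zero_of_boundary (y Z : ℝ → ℂ) {c1 c2 : ℝ} (hc : |c1| + |c2| ≠ 0) {t : ℝ}
    (hy : (c1 : ℂ) * y t + (c2 : ℂ) * Dq βinv s0 y t = 0)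
    (hZ : (c1 : ℂ) * Z t + (c2 : ℂ) * Dq βinv s0 Z t = 0) :
    wronk βinv s0 y Z t = 0 := by
  have h1 : (c1 : ℂ) * wronk βinv s0 y Z t = 0 := by
    unfold wronk
    linear_combination Dq βinv s0 Z t * hy - Dq βinv s0 y t * hZ
  have h2 : (c2 : ℂ) * wronk βinv s0 y Z t = 0 := by
    unfold wronk
    linear_combination y t * hZ - Z t * hy
  by_contra hW
  have hc1 : c1 = 0 := by exact_mod_cast (mul_eq_zero.mp h1).resolve_right hW
  have hc2 : c2 = 0 := by exact_mod_cast (mul_eq_zero.mp h2).resolve_right hW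
  simp [hc1, hc2] at hc

theorem boundary_condition_conj (γ : ℝ → ℝ) (f : ℝ → ℂ) {c1 c2 t : ℝ}
    (hf : (c1 : ℂ) * f t + (c2 : ℂ) * Dq γ s0 f t = 0) :
    (c1 : ℂ) * conj (f t) + (c2 : ℂ) * Dq γ s0 (fun s => conj (f s)) t = 0 := by
  simpa only [Dq_conj, map_add, map_mul, Complex.conj_ofReal, map_zero] using congrArg conj hf

end DifferenceQuotients

section Lagrange

variable {I : Set ℝ} {β βinv : ℝ → ℝ} {s0 : ℝ}

theorem summable_ofReal_mul_ellBeta_mul (r : ℝ → ℝ) (f g : ℝ → ℂ) {t w w' : ℕ → ℝ}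
    {R Cf Cg CD : ℝ} (hw : Summable fun k => |w k|) (hw' : Summable fun k => |w' k|)
    (hcoef : ∀ k, (w k : ℂ) * DbinvC β βinv s0 (t k) = -(w' k : ℂ))
    (hr : ∀ k, ‖r (t k)‖ ≤ R) (hf : ∀ k, ‖f (t k)‖ ≤ Cf) (hg : ∀ k, ‖g (t k)‖ ≤ Cg)
    (hD : ∀ k, ‖Dq βinv s0 (Dq β s0 f) (t k)‖ ≤ CD) :
    Summable fun k => (w k : ℂ) * (ellBeta β βinv s0 r f (t k) * g (t k)) := by
  have hrC (k : ℕ) : ‖((r (t k) : ℝ) : ℂ)‖ ≤ R := by rw [Complex.norm_real]; exact hr k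
  refine ((summable_ofReal_mul_of_norm_le hw' fun k => norm_mul_le_of_le (hD k) (hg k)).add
    (summable_ofReal_mul_of_norm_le hw fun k =>
      norm_mul_le_of_le (hrC k) (norm_mul_le_of_le (hf k) (hg k)))).congr fun k => ?_
  simp only [ellBeta]
  linear_combination Dq βinv s0 (Dq β s0 f) (t k) * g (t k) * hcoef k

theorem tendsto_wronk_iterate {y Z : ℝ → ℂ} {x : ℝ}
    (hlim : Tendsto (fun k => β^[k] x) atTop (𝓝 s0)) (hne : ∀ k, β^[k] x ≠ s0)
    (hleft : ∀ k, βinv (β (β^[k] x)) = β^[k] x) (hy : ContinuousAt y s0)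
    (hZ : ContinuousAt Z s0) (hDy : ContinuousAt (Dq β s0 y) s0)
    (hDZ : ContinuousAt (Dq β s0 Z) s0) :
    Tendsto (fun k => wronk βinv s0 y Z (β^[k] x)) atTop (𝓝 (wronk βinv s0 y Z s0)) := by
  have hW0 : wronk βinv s0 y Z s0 = y s0 * Dq β s0 Z s0 - Z s0 * Dq β s0 y s0 := by
    simp [wronk, Dq]
  have hWsucc (k : ℕ) : wronk βinv s0 y Z (β^[k + 1] x) =
      y (β^[k + 1] x) * Dq β s0 Z (β^[k] x) - Z (β^[k + 1] x) * Dq β s0 y (β^[k] x) := by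
    have hβne := hne (k + 1)
    rw [iterate_succ_apply'] at hβne ⊢
    simp only [wronk, Dq_inv_apply_eq_Dq _ (hne k) hβne (hleft k)]
  have hlim1 := (tendsto_add_atTop_iff_nat 1).2 hlim
  rw [← tendsto_add_atTop_iff_nat 1, hW0]
  simp_rw [hWsucc]
  exact ((hy.tendsto.comp hlim1).mul (hDZ.tendsto.comp hlim)).sub
    ((hZ.tendsto.comp hlim1).mul (hDy.tendsto.comp hlim))

theorem exists_forall_norm_comp_le_of_tendsto {f : ℝ → ℂ} {u : ℕ → ℝ} (hf : ContinuousAt f s0)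
    (hu : Tendsto u atTop (𝓝 s0)) : ∃ C, ∀ k, ‖f (u k)‖ ≤ C := by
  obtain ⟨C, hC⟩ := (hf.tendsto.comp hu).norm.bddAbove_range
  exact ⟨C, fun k => hC ⟨k, rfl⟩⟩

theorem betaInt_ellBeta_mul_sub_betaInt_mul_ellBeta (hIconn : I.OrdConnected)
    (hmono : StrictMonoOn β I) (hcont : ContinuousOn β I) (hmaps : MapsTo β I I)
    (hinv : InvOn βinv β I I) (hs0I : s0 ∈ I) (hfix : β s0 = s0)
    (hsign : ∀ t ∈ I, (t - s0) * (β t - t) ≤ 0)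
    (huniq : ∀ t ∈ I, (t - s0) * (β t - t) = 0 → t = s0)
    (r : ℝ → ℝ) (y Z : ℝ → ℂ) (hy : ContinuousAt y s0) (hZ : ContinuousAt Z s0)
    (hDy : ContinuousAt (Dq β s0 y) s0) (hDZ : ContinuousAt (Dq β s0 Z) s0)
    {x R Cy CZ : ℝ} (hx : x ∈ I) (hr : ∀ k, ‖r (β^[k] x)‖ ≤ R)
    (hDDy : ∀ k, ‖Dq βinv s0 (Dq β s0 y) (β^[k] x)‖ ≤ Cy)
    (hDDZ : ∀ k, ‖Dq βinv s0 (Dq β s0 Z) (β^[k] x)‖ ≤ CZ) :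
    betaInt β x (fun t => ellBeta β βinv s0 r y t * Z t) -
        betaInt β x (fun t => y t * ellBeta β βinv s0 r Z t) =
      wronk βinv s0 y Z x - wronk βinv s0 y Z s0 := by
  rcases eq_or_ne x s0 with rfl | hxs
  · simp [betaInt, iterate_fixed hfix]
  have hmem (k : ℕ) : β^[k] x ∈ I := hmaps.iterate k hx
  have hne := iterate_ne hmono hmaps hs0I hfix hx hxs
  have hsucc (k : ℕ) : β (β^[k] x) = β^[k + 1] x := (iterate_succ_apply' β k x).symm
  have hleft (k : ℕ) : βinv (β (β^[k] x)) = β^[k] x := hinv.1 (hmem k)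
  have hright (k : ℕ) : β (βinv (β^[k] x)) = β^[k] x := hinv.2 (hmem k)
  have hβne (k : ℕ) : β (β^[k] x) ≠ β^[k] x := fun h =>
    hne k (huniq _ (hmem k) (by rw [h, sub_self, mul_zero]))
  have hβinv_ne (k : ℕ) : βinv (β^[k] x) ≠ s0 := fun h => hne k (by rw [← hright k, h, hfix])
  have hlim := tendsto_iterate_nhds hIconn hmono.monotoneOn hcont hmaps hs0I hfix hsign huniq hx
  obtain ⟨Cy', hCy'⟩ := exists_forall_norm_comp_le_of_tendsto hy hlim
  obtain ⟨CZ', hCZ'⟩ := exists_forall_norm_comp_le_of_tendsto hZ hlim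
  have hdiff := summable_abs_iterate_sub hmono.monotoneOn hmaps hs0I hfix hsign hx
  have hdiff_inv : Summable fun k => |β^[k] x - βinv (β^[k] x)| := by
    refine (summable_nat_add_iff 1).mp (hdiff.congr fun k => ?_)
    rw [← hsucc, hleft, abs_sub_comm]
  have hcoef (k : ℕ) : ((β^[k] x - β^[k + 1] x : ℝ) : ℂ) * DbinvC β βinv s0 (β^[k] x) =
      -((β^[k] x - βinv (β^[k] x) : ℝ) : ℂ) := by
    rw [← hsucc]
    exact sub_mul_DbinvC (hne k) (hβne k) (hleft k)
  have S1 := summable_ofReal_mul_ellBeta_mul r y Z hdiff hdiff_inv hcoef hr hCy' hCZ' hDDy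
  have S2 := (summable_ofReal_mul_ellBeta_mul r Z y hdiff hdiff_inv hcoef hr hCZ' hCy'
    hDDZ).congr fun k => by rw [mul_comm (ellBeta _ _ _ _ _ _)]
  rw [betaInt, betaInt, ← S1.tsum_sub S2]
  refine (S1.sub S2).tsum_eq_sub_of_telescoping (fun k => ?_)
    (tendsto_wronk_iterate hlim hne hleft hy hZ hDy hDZ)
  rw [← mul_sub, ← hsucc]
  exact sub_mul_ellBeta_mul_sub r y Z (hne k) (hsucc k ▸ hne (k + 1)) (hβinv_ne k) (hβne k)
    (hleft k) (hright k)

end Lagrange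

theorem stmt_11_general
    (I : Set ℝ) (hIconn : I.OrdConnected)
    (β βinv : ℝ → ℝ) (s0 : ℝ)
    (hmono : StrictMonoOn β I) (hcont : ContinuousOn β I)
    (hbij : Set.BijOn β I I) (hinv : Set.InvOn βinv β I I)
    (hs0I : s0 ∈ I) (hfix : β s0 = s0)
    (hsign : ∀ t ∈ I, (t - s0) * (β t - t) ≤ 0)
    (huniq : ∀ t ∈ I, (t - s0) * (β t - t) = 0 → t = s0)
    (a b : ℝ) (ha : a ∈ I) (hb : b ∈ I) (has0 : a ≤ s0) (hs0b : s0 ≤ b)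
    (r : ℝ → ℝ) (hr : ContinuousOn r (Set.Icc a b))
    (a1 a2 b1 b2 : ℝ) (ha12 : |a1| + |a2| ≠ 0) (hb12 : |b1| + |b2| ≠ 0) (y z : ℝ → ℂ)
    (hyc : ContinuousAt y s0) (hzc : ContinuousAt z s0)
    (hDyd : DifferentiableAt ℝ (Dq β s0 y) s0) (hDzd : DifferentiableAt ℝ (Dq β s0 z) s0)
    (hDDyb : ∃ C, ∀ t ∈ insert s0 (Set.range (fun j : ℕ => β^[j] a) ∪ Set.range (fun j : ℕ => β^[j] b)), ‖Dq βinv s0 (Dq β s0 y) t‖ ≤ C)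
    (hDDzb : ∃ C, ∀ t ∈ insert s0 (Set.range (fun j : ℕ => β^[j] a) ∪ Set.range (fun j : ℕ => β^[j] b)), ‖Dq βinv s0 (Dq β s0 z) t‖ ≤ C)
    (hybc1 : (a1 : ℂ) * y a + (a2 : ℂ) * Dq βinv s0 y a = 0)
    (hybc2 : (b1 : ℂ) * y b + (b2 : ℂ) * Dq βinv s0 y b = 0)
    (hzbc1 : (a1 : ℂ) * z a + (a2 : ℂ) * Dq βinv s0 z a = 0)
    (hzbc2 : (b1 : ℂ) * z b + (b2 : ℂ) * Dq βinv s0 z b = 0) :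
    betaIntAB β a b (fun t => ellBeta β βinv s0 r y t * conj (z t)) =
      betaIntAB β a b (fun t => y t * conj (ellBeta β βinv s0 r z t)) := by
  have hZ : ContinuousAt (fun s => conj (z s)) s0 := Complex.continuous_conj.continuousAt.comp hzc
  have hDZ : ContinuousAt (Dq β s0 fun s => conj (z s)) s0 := by
    rw [Dq_conj]
    exact Complex.continuous_conj.continuousAt.comp hDzd.continuousAt
  obtain ⟨R, hR⟩ := isCompact_Icc.exists_bound_of_continuousOn hr
  obtain ⟨Cy, hCy⟩ := hDDyb
  obtain ⟨Cz, hCz⟩ := hDDzb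
  have lagrange (x : ℝ) (hx : x ∈ I) (hxab : uIcc s0 x ⊆ Icc a b)
      (horbit : ∀ k, β^[k] x ∈
        insert s0 (Set.range (fun j : ℕ => β^[j] a) ∪ Set.range (fun j : ℕ => β^[j] b))) :
      betaInt β x (fun t => ellBeta β βinv s0 r y t * conj (z t)) -
          betaInt β x (fun t => y t * conj (ellBeta β βinv s0 r z t)) =
        wronk βinv s0 y (fun s => conj (z s)) x - wronk βinv s0 y (fun s => conj (z s)) s0 := by
    simp only [conj_ellBeta]
    refine betaInt_ellBeta_mul_sub_betaInt_mul_ellBeta hIconn hmono hcont hbij.mapsTo hinv hs0I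
      hfix hsign huniq r y _ hyc hZ hDyd.continuousAt hDZ (CZ := Cz) hx
      (fun k => hR _ (hxab (iterate_mem_uIcc hmono.monotoneOn hbij.mapsTo hs0I hfix hsign hx k)))
      (fun k => hCy _ (horbit k)) (fun k => ?_)
    simpa only [Dq_conj, Complex.norm_conj] using hCz _ (horbit k)
  have hA := lagrange a ha (by rw [uIcc_of_ge has0]; exact Icc_subset_Icc_right hs0b)
    fun k => mem_insert_of_mem _ (Or.inl ⟨k, rfl⟩)
  have hB := lagrange b hb (by rw [uIcc_of_le hs0b]; exact Icc_subset_Icc_left has0)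
    fun k => mem_insert_of_mem _ (Or.inr ⟨k, rfl⟩)
  have hWa := wronk_eq_zero_of_boundary y (fun s => conj (z s)) ha12 hybc1
    (boundary_condition_conj βinv z hzbc1)
  have hWb := wronk_eq_zero_of_boundary y (fun s => conj (z s)) hb12 hybc2
    (boundary_condition_conj βinv z hzbc2)
  rw [betaIntAB, betaIntAB]
  linear_combination hB - hA + hWb - hWa

theorem stmt_11
    (I : Set ℝ) (hIconn : I.OrdConnected)
    (β βinv : ℝ → ℝ) (s0 : ℝ)
    (hmono : StrictMonoOn β I) (hcont : ContinuousOn β I)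
    (hbij : Set.BijOn β I I) (hinv : Set.InvOn βinv β I I)
    (hs0I : s0 ∈ I) (hfix : β s0 = s0)
    (hsign : ∀ t ∈ I, (t - s0) * (β t - t) ≤ 0)
    (huniq : ∀ t ∈ I, (t - s0) * (β t - t) = 0 → t = s0)
    (a b : ℝ) (ha : a ∈ I) (hb : b ∈ I) (has0 : a ≤ s0) (hs0b : s0 ≤ b)
    (r : ℝ → ℝ) (hr : ContinuousOn r (Set.Icc a b))
    (a1 a2 b1 b2 : ℝ) (ha12 : |a1| + |a2| ≠ 0) (hb12 : |b1| + |b2| ≠ 0) (y z : ℝ → ℂ)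
    (hyL2a : Summable fun j : ℕ => (β^[j] a - β^[j + 1] a) * ‖y (β^[j] a)‖ ^ 2)
    (hyL2b : Summable fun j : ℕ => (β^[j] b - β^[j + 1] b) * ‖y (β^[j] b)‖ ^ 2)
    (hzL2a : Summable fun j : ℕ => (β^[j] a - β^[j + 1] a) * ‖z (β^[j] a)‖ ^ 2)
    (hzL2b : Summable fun j : ℕ => (β^[j] b - β^[j + 1] b) * ‖z (β^[j] b)‖ ^ 2)
    (hyc : ContinuousAt y s0) (hzc : ContinuousAt z s0)
    (hyd : DifferentiableAt ℝ y s0) (hzd : DifferentiableAt ℝ z s0)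
    (hDyd : DifferentiableAt ℝ (Dq β s0 y) s0) (hDzd : DifferentiableAt ℝ (Dq β s0 z) s0)
    (hDyb : ∃ C, ∀ t ∈ insert s0 (Set.range (fun j : ℕ => β^[j] a) ∪ Set.range (fun j : ℕ => β^[j] b)), ‖Dq β s0 y t‖ ≤ C)
    (hDzb : ∃ C, ∀ t ∈ insert s0 (Set.range (fun j : ℕ => β^[j] a) ∪ Set.range (fun j : ℕ => β^[j] b)), ‖Dq β s0 z t‖ ≤ C)
    (hDDyb : ∃ C, ∀ t ∈ insert s0 (Set.range (fun j : ℕ => β^[j] a) ∪ Set.range (fun j : ℕ => β^[j] b)), ‖Dq βinv s0 (Dq β s0 y) t‖ ≤ C)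
    (hDDzb : ∃ C, ∀ t ∈ insert s0 (Set.range (fun j : ℕ => β^[j] a) ∪ Set.range (fun j : ℕ => β^[j] b)), ‖Dq βinv s0 (Dq β s0 z) t‖ ≤ C)
    (hybc1 : (a1 : ℂ) * y a + (a2 : ℂ) * Dq βinv s0 y a = 0)
    (hybc2 : (b1 : ℂ) * y b + (b2 : ℂ) * Dq βinv s0 y b = 0)
    (hzbc1 : (a1 : ℂ) * z a + (a2 : ℂ) * Dq βinv s0 z a = 0)
    (hzbc2 : (b1 : ℂ) * z b + (b2 : ℂ) * Dq βinv s0 z b = 0) :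
    betaIntAB β a b (fun t => ellBeta β βinv s0 r y t * conj (z t)) =
      betaIntAB β a b (fun t => y t * conj (ellBeta β βinv s0 r z t)) :=
  stmt_11_general I hIconn β βinv s0 hmono hcont hbij hinv hs0I hfix hsign huniq a b ha hb has0 hs0b
    r hr a1 a2 b1 b2 ha12 hb12 y z hyc hzc hDyd hDzd hDDyb hDDzb hybc1 hybc2 hzbc1 hzbc2
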